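/- For every natural number s ≥ 1 and every natural number n, the sequence (A_n) satisfies A_{3n} = (s^2 + 4)·A_n^3 + 3·(-1)^n·A_n. -/
import Mathlib


def aseq (s : ℕ) : ℕ → ℤ
  | 0 => 0
  | 1 => 1
  | n + 2 => s * aseq s (n + 1) + aseq s n

lemma aseq_step (s k : ℕ) : aseq s (k + 2) = s * aseq s (k + 1) + aseq s k := rfl

lemma aseq_key (s : ℕ) (n : ℕ) :
    aseq s (3 * n) = 3 * aseq s n * (aseq s (n+1))^2 - 3 * s * (aseq s n)^2 * aseq s (n+1)
        + (1 + (s:ℤ)^2) * (aseq s n)^3 ∧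
    aseq s (3 * n + 1) = (aseq s (n+1))^3 + 3 * (aseq s n)^2 * aseq s (n+1) - s * (aseq s n)^3 ∧
    (aseq s (n+1))^2 - s * aseq s n * aseq s (n+1) - (aseq s n)^2 = (-1 : ℤ)^n := by
  induction n with
  | zero => simp [aseq]
  | succ n ih =>
    obtain ⟨h1, h2, h3⟩ := ih
    have e2 : aseq s (3*n+2) = s * aseq s (3*n+1) + aseq s (3*n) := aseq_step s (3*n)
    have e3 : aseq s (3*(n+1)) = s * aseq s (3*n+2) + aseq s (3*n+1) := by
      have : 3*(n+1) = (3*n+1) + 2 := by ring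
      rw [this, aseq_step]
    have e4 : aseq s (3*(n+1)+1) = s * aseq s (3*(n+1)) + aseq s (3*n+2) := by
      have : 3*(n+1)+1 = (3*n+2) + 2 := by ring
      rw [this, aseq_step]
      have : 3*n+2+1 = 3*(n+1) := by ring
      rw [this]
    have e5 : aseq s (n+1+1) = s * aseq s (n+1) + aseq s n := aseq_step s n
    refine ⟨?_, ?_, ?_⟩
    · rw [e3, e2, h1, h2, e5]
      ring
    · rw [e4, e3, e2, h1, h2, e5]
      ring
    · rw [e5, pow_succ]
      linear_combination (-1 : ℤ) * h3

theorem aseq_three_mul (s : ℕ) (hs : 1 ≤ s) (n : ℕ) :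
    aseq s (3 * n) = ((s : ℤ) ^ 2 + 4) * aseq s n ^ 3 + 3 * (-1 : ℤ) ^ n * aseq s n := by
  obtain ⟨h1, _, h3⟩ := aseq_key s n
  rw [h1, ← h3]
  ring
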